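/- arXiv:2501.17735 — 3 statements merged into one kernel-verified Lean document; each statement's English description precedes it below -/
import Mathlib

section
/- Let ν ∈ (0,1], let k ≠ 0 and l be integers, and let η ∈ ℝ. Then for all t ≥ 0 one has m(t; k, η, l) ≥ √(k² + l²) / √(k² + (η − kt)² + l²). -/
/-- The multiplier symbol `m(t; k, η, l)`. -/
noncomputable def mSymb (ν : ℝ) (k l : ℤ) (η t : ℝ) : ℝ :=
  Real.exp (∫ s in (0:ℝ)..t,
    Set.indicator (Set.Icc (η / (k:ℝ)) (η / (k:ℝ) + 1000 * ν ^ ((-1 : ℝ)/3)))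
      (fun s => (k:ℝ) * (η - (k:ℝ) * s) /
        ((k:ℝ)^2 + (η - (k:ℝ) * s)^2 + (l:ℝ)^2)) s)

/-! The integrand of `m` is `k (η - k s) / |(k, η - k s, l)|² = -½ d/ds log |(k, η - k s, l)|²`,
and multiplying it by the indicator of `[a, b]`, `a = η / k`, amounts to clamping the limits of
integration `0` and `t` into `[a, b]`. Hence `m(t) = |(k, η - k c₀, l)| / |(k, η - k cₜ, l)|` with
`c = max a (min b ·)`. The numerator is at least `|(k, l)|`, and since clamping moves `t` towards
the vertex `a` of the parabola `s ↦ (η - k s)²`, the denominator is at most `|(k, η - k t, l)|`. -/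

open Set MeasureTheory Real

lemma Ioc_inter_Ioc_eq_Ioc_max_min {α : Type*} [LinearOrder α] (a b u v : α) :
    Ioc a b ∩ Ioc u v = Ioc (max a (min b u)) (max a (min b v)) := by
  ext s
  simp only [mem_inter_iff, mem_Ioc, max_lt_iff, min_lt_iff, le_max_iff, le_min_iff]
  grind

lemma intervalIntegral_indicator_Icc {E : Type*} [NormedAddCommGroup E] [NormedSpace ℝ E]
    (f : ℝ → E) (a b u v : ℝ) :
    ∫ s in u..v, (Icc a b).indicator f s = ∫ s in max a (min b u)..max a (min b v), f s := by
  wlog huv : u ≤ v generalizing u v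
  · rw [intervalIntegral.integral_symm, this v u (le_of_not_ge huv), intervalIntegral.integral_symm,
      neg_neg]
  have hclamp : max a (min b u) ≤ max a (min b v) := by gcongr
  rw [intervalIntegral.integral_of_le huv, intervalIntegral.integral_of_le hclamp,
    ← Ioc_inter_Ioc_eq_Ioc_max_min, ← Measure.restrict_restrict measurableSet_Ioc]
  refine (integral_congr_ae (ae_restrict_of_ae ?_)).trans (integral_indicator measurableSet_Ioc)
  exact (indicator_ae_eq_of_ae_eq_set Ioc_ae_eq_Icc).symm

lemma abs_sub_max_min_le {α : Type*} [AddCommGroup α] [LinearOrder α] [IsOrderedAddMonoid α]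
    (a b t : α) : |a - max a (min b t)| ≤ |a - t| := by
  rcases le_total t a with hta | hat
  · simp [max_eq_left (min_le_of_right_le hta)]
  · rw [abs_sub_comm, abs_of_nonneg (sub_nonneg.2 (le_max_left _ _)), abs_sub_comm,
      abs_of_nonneg (sub_nonneg.2 hat)]
    gcongr
    exact max_le hat (min_le_right _ _)

/-- `|(k, η - k s, l)|²` -/
def freqNormSq (k η l s : ℝ) : ℝ := k ^ 2 + (η - k * s) ^ 2 + l ^ 2

section freqNormSq

variable {k η l : ℝ}

lemma sq_add_sq_le_freqNormSq (s : ℝ) : k ^ 2 + l ^ 2 ≤ freqNormSq k η l s := by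
  unfold freqNormSq
  nlinarith [sq_nonneg (η - k * s)]

lemma freqNormSq_pos (hk : k ≠ 0) (s : ℝ) : 0 < freqNormSq k η l s :=
  lt_of_lt_of_le (by positivity) (sq_add_sq_le_freqNormSq s)

lemma freqNormSq_le_of_abs_sub_le (hk : k ≠ 0) {s t : ℝ} (h : |η / k - s| ≤ |η / k - t|) :
    freqNormSq k η l s ≤ freqNormSq k η l t := by
  have hη (r : ℝ) : η - k * r = k * (η / k - r) := by field_simp
  unfold freqNormSq
  rw [hη s, hη t, mul_pow, mul_pow]
  have := mul_le_mul_of_nonneg_left (sq_le_sq.2 h) (sq_nonneg k)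
  linarith

lemma hasDerivAt_freqNormSq (s : ℝ) :
    HasDerivAt (freqNormSq k η l) (-2 * k * (η - k * s)) s := by
  have h : HasDerivAt (fun r => η - k * r) (-k) s := by
    simpa using ((hasDerivAt_id s).const_mul k).const_sub η
  exact (((h.pow 2).const_add (k ^ 2)).add_const (l ^ 2)).congr_deriv (by ring)

lemma integral_div_freqNormSq (hk : k ≠ 0) (u v : ℝ) :
    ∫ s in u..v, k * (η - k * s) / freqNormSq k η l s =
      log (√(freqNormSq k η l u) / √(freqNormSq k η l v)) := by
  have hderiv (s : ℝ) : HasDerivAt (fun r => -log (freqNormSq k η l r) / 2)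
      (k * (η - k * s) / freqNormSq k η l s) s := by
    have h := ((hasDerivAt_freqNormSq (η := η) (l := l) s).log
      (freqNormSq_pos hk s).ne').neg.div_const 2
    exact h.congr_deriv (by field_simp)
  have hcont : Continuous fun s => k * (η - k * s) / freqNormSq k η l s :=
    (by fun_prop : Continuous fun s => k * (η - k * s)).div (by unfold freqNormSq; fun_prop)
      fun s => (freqNormSq_pos hk s).ne'
  rw [intervalIntegral.integral_eq_sub_of_hasDerivAt (fun s _ => hderiv s)
      (hcont.intervalIntegrable u v), log_div (sqrt_pos.2 (freqNormSq_pos hk u)).ne'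
      (sqrt_pos.2 (freqNormSq_pos hk v)).ne', log_sqrt (freqNormSq_pos hk u).le,
    log_sqrt (freqNormSq_pos hk v).le]
  ring

end freqNormSq

theorem m_lower_bound_ratio_general
    (ν : ℝ)
    (k l : ℤ) (hk : k ≠ 0) (η : ℝ) :
    ∀ t : ℝ, 0 ≤ t →
      Real.sqrt ((k:ℝ)^2 + (l:ℝ)^2) /
          Real.sqrt ((k:ℝ)^2 + (η - (k:ℝ)*t)^2 + (l:ℝ)^2)
        ≤ mSymb ν k l η t := by
  intro t _
  have hk' : (k : ℝ) ≠ 0 := by exact_mod_cast hk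
  rw [mSymb]
  simp only [← freqNormSq.eq_1]
  rw [intervalIntegral_indicator_Icc, integral_div_freqNormSq hk',
    exp_log (div_pos (sqrt_pos.2 (freqNormSq_pos hk' _)) (sqrt_pos.2 (freqNormSq_pos hk' _)))]
  exact div_le_div₀ (sqrt_nonneg _) (sqrt_le_sqrt (sq_add_sq_le_freqNormSq _))
    (sqrt_pos.2 (freqNormSq_pos hk' _))
    (sqrt_le_sqrt (freqNormSq_le_of_abs_sub_le hk' (abs_sub_max_min_le _ _ _)))

/-- Sharp lower bound of `m` by the frequency ratio:
`m(t;k,η,l) ≥ |(k,l)| / |(k, η - kt, l)|`. -/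
theorem m_lower_bound_ratio
    (ν : ℝ) (hν : 0 < ν) (hν1 : ν ≤ 1)
    (k l : ℤ) (hk : k ≠ 0) (η : ℝ) :
    ∀ t : ℝ, 0 ≤ t →
      Real.sqrt ((k:ℝ)^2 + (l:ℝ)^2) /
          Real.sqrt ((k:ℝ)^2 + (η - (k:ℝ)*t)^2 + (l:ℝ)^2)
        ≤ mSymb ν k l η t :=
  m_lower_bound_ratio_general ν k l hk η
end

section
/- Let ν ∈ (0,1], let k ≠ 0 and l be integers, and let η, t ≥ 0 be real numbers. Set ρ_L := √(k² + (η − kt)² + l²). Then |l| / ((k² + l²) ρ_L) ≤ m(t; k, η, l) and |k| |η − kt| / ((k² + l²) ρ_L²) ≤ m(t; k, η, l). -/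
open Real Set MeasureTheory

section SignChange

variable {F f : ℝ → ℝ} {c : ℝ}

theorem le_of_hasDerivAt_of_sign_change (hF : ∀ s, HasDerivAt F (f s) s)
    (hf_nonneg : ∀ s ≤ c, 0 ≤ f s) (hf_nonpos : ∀ s, c ≤ s → f s ≤ 0) (s : ℝ) :
    F s ≤ F c := by
  have hFc : Continuous F := continuous_iff_continuousAt.2 fun s => (hF s).continuousAt
  rcases le_total s c with hs | hs
  · refine monotoneOn_of_hasDerivWithinAt_nonneg (convex_Iic c) hFc.continuousOn
      (fun x _ => (hF x).hasDerivWithinAt) (fun x hx => hf_nonneg x ?_) hs self_mem_Iic hs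
    rw [interior_Iic] at hx
    exact hx.le
  · refine antitoneOn_of_hasDerivWithinAt_nonpos (convex_Ici c) hFc.continuousOn
      (fun x _ => (hF x).hasDerivWithinAt) (fun x hx => hf_nonpos x ?_) self_mem_Ici hs hs
    rw [interior_Ici] at hx
    exact hx.le

theorem hasDerivWithinAt_comp_max_Ioi (hF : ∀ s, HasDerivAt F (f s) s)
    (hf_nonneg : ∀ s ≤ c, 0 ≤ f s) (hf_nonpos : ∀ s, c ≤ s → f s ≤ 0) (s : ℝ) :
    HasDerivWithinAt (fun x => F (max x c)) (min (f s) 0) (Ioi s) s := by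
  rcases lt_or_ge s c with hs | hs
  · rw [min_eq_right (hf_nonneg s hs.le)]
    refine ((hasDerivAt_const s (F c)).congr_of_eventuallyEq ?_).hasDerivWithinAt
    filter_upwards [Iio_mem_nhds hs] with x hx
    rw [max_eq_right hx.le]
  · rw [min_eq_left (hf_nonpos s hs)]
    refine (hF s).hasDerivWithinAt.congr (fun x hx => ?_) (by rw [max_eq_left hs])
    rw [max_eq_left (hs.trans hx.le)]

theorem min_le_indicator (S : Set ℝ) (s : ℝ) : min (f s) 0 ≤ S.indicator f s := by
  by_cases hs : s ∈ S
  · simp [indicator_of_mem hs]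
  · simp [indicator_of_notMem hs]

/-- `s ↦ F (max s c)` is a right antiderivative of `min f 0`, which lies below every
cut-off `S.indicator f`. -/
theorem sub_le_integral_indicator_of_sign_change (hF : ∀ s, HasDerivAt F (f s) s)
    (hf_nonneg : ∀ s ≤ c, 0 ≤ f s) (hf_nonpos : ∀ s, c ≤ s → f s ≤ 0)
    {S : Set ℝ} (hS : MeasurableSet S) {a b : ℝ} (hab : a ≤ b) (hf : IntegrableOn f (Icc a b)) :
    F b - F c ≤ ∫ s in a..b, S.indicator f s := by
  have hmax := le_of_hasDerivAt_of_sign_change hF hf_nonneg hf_nonpos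
  have hFb : F b ≤ F (max b c) := by
    rcases le_total b c with h | h
    · rw [max_eq_right h]
      exact hmax b
    · rw [max_eq_left h]
  have hFc : Continuous F := continuous_iff_continuousAt.2 fun s => (hF s).continuousAt
  calc F b - F c ≤ F (max b c) - F (max a c) := by linarith [hmax (max a c)]
    _ ≤ ∫ s in a..b, S.indicator f s :=
      intervalIntegral.sub_le_integral_of_hasDeriv_right_of_le hab
        (hFc.comp (continuous_id.max continuous_const)).continuousOn
        (fun s _ => hasDerivWithinAt_comp_max_Ioi hF hf_nonneg hf_nonpos s)
        (hf.indicator hS) (fun s _ => min_le_indicator S s)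

end SignChange

section Symbol

variable {k l η : ℝ}

theorem rhoL_sq_pos (hk : k ≠ 0) (s : ℝ) : 0 < k ^ 2 + (η - k * s) ^ 2 + l ^ 2 := by
  positivity

theorem hasDerivAt_neg_half_log_rhoL_sq (hk : k ≠ 0) (s : ℝ) :
    HasDerivAt (fun s => -(1 / 2) * log (k ^ 2 + (η - k * s) ^ 2 + l ^ 2))
      (k * (η - k * s) / (k ^ 2 + (η - k * s) ^ 2 + l ^ 2)) s := by
  have hX : HasDerivAt (fun s => k ^ 2 + (η - k * s) ^ 2 + l ^ 2) (2 * (η - k * s) * -k) s := by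
    have := (((hasDerivAt_id s).const_mul k).const_sub η).pow 2
    refine ((this.const_add (k ^ 2)).add_const (l ^ 2)).congr_deriv ?_
    simp
  refine ((hX.log (rhoL_sq_pos hk s).ne').const_mul (-(1 / 2))).congr_deriv ?_
  field_simp

theorem mul_sub_mul_eq_sq_mul (hk : k ≠ 0) (s : ℝ) : k * (η - k * s) = k ^ 2 * (η / k - s) := by
  field_simp

theorem symbol_nonneg (hk : k ≠ 0) {s : ℝ} (hs : s ≤ η / k) :
    0 ≤ k * (η - k * s) / (k ^ 2 + (η - k * s) ^ 2 + l ^ 2) := by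
  rw [mul_sub_mul_eq_sq_mul hk]
  have : 0 ≤ η / k - s := by linarith
  positivity

theorem symbol_nonpos (hk : k ≠ 0) {s : ℝ} (hs : η / k ≤ s) :
    k * (η - k * s) / (k ^ 2 + (η - k * s) ^ 2 + l ^ 2) ≤ 0 := by
  rw [mul_sub_mul_eq_sq_mul hk]
  exact div_nonpos_of_nonpos_of_nonneg
    (mul_nonpos_of_nonneg_of_nonpos (sq_nonneg k) (by linarith)) (rhoL_sq_pos hk s).le

theorem continuous_symbol (hk : k ≠ 0) :
    Continuous fun s => k * (η - k * s) / (k ^ 2 + (η - k * s) ^ 2 + l ^ 2) :=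
  Continuous.div (by fun_prop) (by fun_prop) fun s => (rhoL_sq_pos hk s).ne'

end Symbol

theorem exp_neg_half_mul_log {x : ℝ} (hx : 0 < x) : exp (-(1 / 2) * log x) = (√x)⁻¹ := by
  rw [show -(1 / 2) * log x = -(log x / 2) by ring, exp_neg, exp_half, exp_log hx]

theorem sqrt_div_sqrt_le_mSymb (ν : ℝ) {k : ℤ} (hk : k ≠ 0) (l : ℤ) (η : ℝ) {t : ℝ}
    (ht : 0 ≤ t) :
    √((k:ℝ) ^ 2 + (l:ℝ) ^ 2) / √((k:ℝ) ^ 2 + (η - (k:ℝ) * t) ^ 2 + (l:ℝ) ^ 2)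
      ≤ mSymb ν k l η t := by
  have hk' : (k:ℝ) ≠ 0 := Int.cast_ne_zero.2 hk
  have hc : (k:ℝ) ^ 2 + (η - k * (η / k)) ^ 2 + l ^ 2 = k ^ 2 + l ^ 2 := by
    field_simp
    ring
  unfold mSymb
  calc √((k:ℝ) ^ 2 + (l:ℝ) ^ 2) / √((k:ℝ) ^ 2 + (η - (k:ℝ) * t) ^ 2 + (l:ℝ) ^ 2)
      = exp (-(1 / 2) * log ((k:ℝ) ^ 2 + (η - k * t) ^ 2 + l ^ 2)
          - -(1 / 2) * log ((k:ℝ) ^ 2 + (η - k * (η / k)) ^ 2 + l ^ 2)) := by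
        rw [hc, exp_sub, exp_neg_half_mul_log (rhoL_sq_pos hk' t),
          exp_neg_half_mul_log (by positivity)]
        field_simp
    _ ≤ _ := exp_le_exp.2 <|
      sub_le_integral_indicator_of_sign_change (hasDerivAt_neg_half_log_rhoL_sq hk')
        (fun _ => symbol_nonneg hk') (fun _ => symbol_nonpos hk') measurableSet_Icc ht
        (continuous_symbol hk').integrableOn_Icc

section Bounds

variable {a b K R : ℝ}

theorem div_mul_sqrt_le_sqrt_div_sqrt (ha : a ≤ √K) (hK : 1 ≤ K) (hR : 0 < R) :
    a / (K * √R) ≤ √K / √R := by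
  calc a / (K * √R) ≤ √K / (K * √R) := by gcongr
    _ = √K / √R / K := by rw [div_div, mul_comm]
    _ ≤ √K / √R := div_le_self (by positivity) hK

theorem mul_div_mul_le_sqrt_div_sqrt (ha : 0 ≤ a) (haK : a ≤ √K) (hb : b ≤ √R) (hK : 1 ≤ K)
    (hR : 0 < R) : a * b / (K * R) ≤ √K / √R := by
  calc a * b / (K * R) ≤ a * √R / (K * R) := by gcongr
    _ = a / (K * √R) := by
      have := sqrt_pos.2 hR
      field_simp
      rw [sq_sqrt hR.le]
    _ ≤ √K / √R := div_mul_sqrt_le_sqrt_div_sqrt haK hK hR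

end Bounds

theorem one_le_intCast_sq {k : ℤ} (hk : k ≠ 0) : (1 : ℝ) ≤ (k : ℝ) ^ 2 := by
  rw [one_le_sq_iff_one_le_abs, ← Int.cast_abs]
  exact_mod_cast Int.one_le_abs hk

theorem reconstruction_symbols_dominated_by_m_general
    (ν : ℝ)
    (k l : ℤ) (hk : k ≠ 0) (η t : ℝ) (ht : 0 ≤ t) :
    |(l:ℝ)| / (((k:ℝ)^2 + (l:ℝ)^2) *
        Real.sqrt ((k:ℝ)^2 + (η - (k:ℝ)*t)^2 + (l:ℝ)^2))
      ≤ mSymb ν k l η t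
    ∧ |(k:ℝ)| * |η - (k:ℝ)*t| / (((k:ℝ)^2 + (l:ℝ)^2) *
        ((k:ℝ)^2 + (η - (k:ℝ)*t)^2 + (l:ℝ)^2))
      ≤ mSymb ν k l η t := by
  have hm := sqrt_div_sqrt_le_mSymb ν hk l η ht
  have hK : (1 : ℝ) ≤ (k:ℝ)^2 + (l:ℝ)^2 := by linarith [one_le_intCast_sq hk, sq_nonneg (l:ℝ)]
  have hR : (0 : ℝ) < (k:ℝ)^2 + (η - (k:ℝ)*t)^2 + (l:ℝ)^2 := by positivity
  refine ⟨(div_mul_sqrt_le_sqrt_div_sqrt ?_ hK hR).trans hm,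
    (mul_div_mul_le_sqrt_div_sqrt (abs_nonneg _) ?_ ?_ hK hR).trans hm⟩ <;>
  · apply abs_le_sqrt
    linarith [sq_nonneg (k:ℝ), sq_nonneg (l:ℝ), sq_nonneg (η - (k:ℝ)*t)]

/-- The symbols arising in the reconstruction of `U¹, U³` from the good
unknowns are dominated by `m`:
`|l|/((k²+l²)ρ_L) ≤ m` and `|k||η-kt|/((k²+l²)ρ_L²) ≤ m`. -/
theorem reconstruction_symbols_dominated_by_m
    (ν : ℝ) (hν : 0 < ν) (hν1 : ν ≤ 1)
    (k l : ℤ) (hk : k ≠ 0) (η t : ℝ) (ht : 0 ≤ t) :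
    |(l:ℝ)| / (((k:ℝ)^2 + (l:ℝ)^2) *
        Real.sqrt ((k:ℝ)^2 + (η - (k:ℝ)*t)^2 + (l:ℝ)^2))
      ≤ mSymb ν k l η t
    ∧ |(k:ℝ)| * |η - (k:ℝ)*t| / (((k:ℝ)^2 + (l:ℝ)^2) *
        ((k:ℝ)^2 + (η - (k:ℝ)*t)^2 + (l:ℝ)^2))
      ≤ mSymb ν k l η t :=
  reconstruction_symbols_dominated_by_m_general ν k l hk η t ht
end

section
/- Let β ∈ ℝ with β < 0 or β > 1, set α := √(β(β−1)), let ν ∈ (0,1], let k ≠ 0 and l be integers, and let η ∈ ℝ. Set ρ_L(t) := √(k² + (η − kt)² + l²). Suppose Q, W : [0,∞) → ℂ are differentiable and solve Q′(t) = −ν ρ_L(t)² Q(t) − i α (l/ρ_L(t)) W(t) and W′(t) = −ν ρ_L(t)² W(t) − (k(η − kt)/ρ_L(t)²) W(t) − i α (l/ρ_L(t)) Q(t). Then for all t ≥ 0: √((β−1)/β) · (|l| / ((k² + l²) ρ_L(t))) · |W(t)| + (|k| |η − kt| / ((k² + l²) ρ_L(t)²)) · |Q(t)| ≤ (√((β−1)/β)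 + 1) · e^{−ν k² t³ / 24} · √(|Q(0)|² + |W(0)|²). -/
/-- The moving-frame frequency modulus `ρ_L(t) = |(k, η - kt, l)|`. -/
noncomputable def rhoL (k l : ℤ) (η t : ℝ) : ℝ :=
  Real.sqrt ((k:ℝ)^2 + (η - (k:ℝ)*t)^2 + (l:ℝ)^2)

/-!
The coupling `i α l/ρ_L` is skew, so the energy `E = |Q|² + |W|²` obeys
`E' = -2νρ_L² E - 2 (k(η - kt)/ρ_L²) |W|²`. Let `M(t) = ∫₀ᵗ ρ_L²`. Before the critical time
`t = η/k` the last term is dissipative and `E e^{2νM}` decreases; after it, `(ρ_L²)' = -2k(η - kt)`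
absorbs that term and `E/ρ_L² · e^{2νM}` decreases. Together,
`E(t)/ρ_L(t)² ≤ E(0)/(k² + l²) · e^{-2νM(t)}` with `M(t) ≥ k²t³/12`, and the weights in front of
`|W|` and `|Q|` are small enough to be paid for by the factor `ρ_L(t)⁻²`.
-/

open Set

theorem antitoneOn_Icc_of_hasDerivAt_nonpos {f f' : ℝ → ℝ} {u v : ℝ}
    (hf : ∀ s ∈ Icc u v, HasDerivAt f (f' s) s) (hf' : ∀ s ∈ Ioo u v, f' s ≤ 0) :
    AntitoneOn f (Icc u v) := by
  refine antitoneOn_of_hasDerivWithinAt_nonpos (f' := f') (convex_Icc u v)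
    (fun s hs => (hf s hs).continuousAt.continuousWithinAt) (fun s hs => ?_) ?_
  · rw [interior_Icc] at hs
    exact (hf s (Ioo_subset_Icc_self hs)).hasDerivWithinAt
  · rwa [interior_Icc]

theorem le_mul_sqrt_of_sq_le {x c y : ℝ} (hc : 0 ≤ c) (h : x ^ 2 ≤ c ^ 2 * y) : x ≤ c * √y := by
  rw [← Real.sqrt_sq hc, ← Real.sqrt_mul (sq_nonneg c)]
  exact Real.le_sqrt_of_sq_le h

theorem exists_mem_Icc_forall_le_and_forall_ge (c : ℝ) {T : ℝ} (hT : 0 ≤ T) :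
    ∃ s₁ ∈ Icc 0 T, (∀ s ∈ Ioo 0 s₁, s ≤ c) ∧ ∀ s ∈ Ioo s₁ T, c ≤ s := by
  refine ⟨max 0 (min c T), ⟨le_max_left _ _, max_le hT (min_le_right _ _)⟩, ?_, ?_⟩
  · rintro s ⟨hs₀, hs⟩
    rcases lt_max_iff.1 hs with hs | hs
    · exact absurd hs₀ hs.not_gt
    · exact (lt_min_iff.1 hs).1.le
  · rintro s ⟨hs, hsT⟩
    rcases min_lt_iff.1 (max_lt_iff.1 hs).2 with hs | hs
    · exact hs.le
    · exact absurd hsT hs.not_gt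

section DissipativeEnergy

variable {a b A E P : ℝ → ℝ} {u v : ℝ}

theorem antitoneOn_mul_exp_of_hasDerivAt
    (hA : ∀ s ∈ Icc u v, HasDerivAt A (a s) s)
    (hE : ∀ s ∈ Icc u v, HasDerivAt E (-2 * a s * E s - 2 * b s * P s) s)
    (hb : ∀ s ∈ Ioo u v, 0 ≤ b s) (hP : ∀ s ∈ Ioo u v, 0 ≤ P s) :
    AntitoneOn (fun t => E t * Real.exp (2 * A t)) (Icc u v) := by
  refine antitoneOn_Icc_of_hasDerivAt_nonpos
    (f' := fun s => -2 * (b s * P s) * Real.exp (2 * A s)) (fun s hs => ?_) (fun s hs => ?_)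
  · refine ((hE s hs).mul ((hA s hs).const_mul 2).exp).congr_deriv ?_
    ring
  · have := mul_nonneg (hb s hs) (hP s hs)
    have := Real.exp_pos (2 * A s)
    nlinarith

theorem antitoneOn_div_mul_exp_of_hasDerivAt {m : ℝ → ℝ}
    (hA : ∀ s ∈ Icc u v, HasDerivAt A (a s) s)
    (hE : ∀ s ∈ Icc u v, HasDerivAt E (-2 * a s * E s - 2 * b s * P s) s)
    (hm : ∀ s ∈ Icc u v, HasDerivAt m (-2 * b s * m s) s) (hm₀ : ∀ s ∈ Icc u v, 0 < m s)
    (hb : ∀ s ∈ Ioo u v, b s ≤ 0) (hPE : ∀ s ∈ Ioo u v, P s ≤ E s) :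
    AntitoneOn (fun t => E t / m t * Real.exp (2 * A t)) (Icc u v) := by
  refine antitoneOn_Icc_of_hasDerivAt_nonpos
    (f' := fun s => 2 * (b s * (E s - P s)) / m s * Real.exp (2 * A s))
    (fun s hs => ?_) (fun s hs => ?_)
  · have hm₀' := (hm₀ s hs).ne'
    refine (((hE s hs).div (hm s hs) hm₀').mul ((hA s hs).const_mul 2).exp).congr_deriv ?_
    rw [Pi.div_apply]
    field_simp
    ring
  · have hbEP : b s * (E s - P s) ≤ 0 :=
      mul_nonpos_of_nonpos_of_nonneg (hb s hs) (sub_nonneg.2 (hPE s hs))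
    exact mul_nonpos_of_nonpos_of_nonneg
      (div_nonpos_of_nonpos_of_nonneg (by linarith) (hm₀ s (Ioo_subset_Icc_self hs)).le)
      (Real.exp_pos _).le

end DissipativeEnergy

theorem hasDerivAt_energy {a b c : ℝ → ℝ} {Q W : ℝ → ℂ} {s : ℝ}
    (hQ : HasDerivAt Q (-(a s : ℂ) * Q s - Complex.I * (c s : ℂ) * W s) s)
    (hW : HasDerivAt W (-(a s : ℂ) * W s - (b s : ℂ) * W s - Complex.I * (c s : ℂ) * Q s) s) :
    HasDerivAt (fun t => ‖Q t‖ ^ 2 + ‖W t‖ ^ 2)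
      (-2 * a s * (‖Q s‖ ^ 2 + ‖W s‖ ^ 2) - 2 * b s * ‖W s‖ ^ 2) s := by
  refine (hQ.norm_sq.add hW.norm_sq).congr_deriv ?_
  simp only [Complex.inner, Complex.sq_norm, Complex.normSq_apply, Complex.sub_re,
    Complex.neg_re, Complex.mul_re, Complex.mul_im, Complex.sub_im, Complex.neg_im,
    Complex.ofReal_re, Complex.ofReal_im, Complex.I_re, Complex.I_im, Complex.conj_re,
    Complex.conj_im]
  ring

section Couette

variable {k l : ℤ} {η : ℝ}

theorem rhoL_sq (k l : ℤ) (η t : ℝ) : rhoL k l η t ^ 2 = k ^ 2 + (η - k * t) ^ 2 + l ^ 2 :=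
  Real.sq_sqrt (by positivity)

theorem one_le_sq_add_sq (hk : k ≠ 0) : (1 : ℝ) ≤ k ^ 2 + l ^ 2 := by
  have : (1 : ℤ) ≤ k ^ 2 + l ^ 2 := by nlinarith [Int.one_le_abs hk, sq_abs k, sq_nonneg l]
  exact_mod_cast this

theorem sq_add_sq_le_rhoL_sq (t : ℝ) : (k : ℝ) ^ 2 + l ^ 2 ≤ rhoL k l η t ^ 2 := by
  rw [rhoL_sq]
  nlinarith [sq_nonneg (η - k * t)]

theorem rhoL_pos (hk : k ≠ 0) (t : ℝ) : 0 < rhoL k l η t :=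
  Real.sqrt_pos.2 (by positivity)

theorem hasDerivAt_rhoL_sq (t : ℝ) :
    HasDerivAt (fun t => rhoL k l η t ^ 2) (-2 * (k * (η - k * t))) t := by
  simp only [rhoL_sq]
  have hlin : HasDerivAt (fun t : ℝ => η - k * t) (-k) t := by
    simpa using ((hasDerivAt_id t).const_mul (k : ℝ)).const_sub η
  refine (((hlin.pow 2).const_add _).add_const _).congr_deriv ?_
  ring

theorem exists_mem_Icc_shear_sign_split (k η : ℝ) {T : ℝ} (hT : 0 ≤ T) :
    ∃ s₁ ∈ Icc 0 T, (∀ s ∈ Ioo 0 s₁, 0 ≤ k * (η - k * s)) ∧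
      ∀ s ∈ Ioo s₁ T, k * (η - k * s) ≤ 0 := by
  have hsq (s : ℝ) : k * (η - k * s) = k ^ 2 * (η / k - s) := by
    rcases eq_or_ne k 0 with rfl | hk
    · simp
    · field_simp
  obtain ⟨s₁, hs₁, hbefore, hafter⟩ := exists_mem_Icc_forall_le_and_forall_ge (η / k) hT
  refine ⟨s₁, hs₁, fun s hs => ?_, fun s hs => ?_⟩
  · rw [hsq]
    exact mul_nonneg (sq_nonneg k) (sub_nonneg.2 (hbefore s hs))
  · rw [hsq]
    exact mul_nonpos_of_nonneg_of_nonpos (sq_nonneg k) (sub_nonpos.2 (hafter s hs))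

/-- `∫₀ᵗ ρ_L(s)² ds`. -/
noncomputable def rhoLSqPrimitive (k l : ℤ) (η t : ℝ) : ℝ :=
  (k ^ 2 + l ^ 2 + η ^ 2) * t - η * k * t ^ 2 + k ^ 2 * t ^ 3 / 3

theorem rhoLSqPrimitive_zero : rhoLSqPrimitive k l η 0 = 0 := by
  simp [rhoLSqPrimitive]

theorem hasDerivAt_rhoLSqPrimitive (t : ℝ) :
    HasDerivAt (rhoLSqPrimitive k l η) (rhoL k l η t ^ 2) t := by
  have h := (((hasDerivAt_id t).const_mul ((k : ℝ) ^ 2 + l ^ 2 + η ^ 2)).sub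
    ((hasDerivAt_pow 2 t).const_mul (η * k))).add
    (((hasDerivAt_pow 3 t).const_mul ((k : ℝ) ^ 2)).div_const 3)
  refine h.congr_deriv ?_
  rw [rhoL_sq]
  push_cast
  ring

theorem rhoLSqPrimitive_ge {t : ℝ} (ht : 0 ≤ t) :
    k ^ 2 * t ^ 3 / 12 ≤ rhoLSqPrimitive k l η t := by
  have hsplit : rhoLSqPrimitive k l η t =
      (k ^ 2 + l ^ 2) * t + t * (η - k * t / 2) ^ 2 + k ^ 2 * t ^ 3 / 12 := by
    unfold rhoLSqPrimitive
    ring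
  have : 0 ≤ ((k : ℝ) ^ 2 + l ^ 2) * t + t * (η - k * t / 2) ^ 2 := by positivity
  linarith

theorem sq_W_weight_mul_le (hk : k ≠ 0) (t q w : ℝ) :
    (|(l : ℝ)| / ((k ^ 2 + l ^ 2) * rhoL k l η t) * w) ^ 2 ≤
      (q ^ 2 + w ^ 2) / rhoL k l η t ^ 2 / (k ^ 2 + l ^ 2) := by
  have hρ := rhoL_pos (l := l) (η := η) hk t
  calc _ = l ^ 2 / (k ^ 2 + l ^ 2) * (w ^ 2 / rhoL k l η t ^ 2 / (k ^ 2 + l ^ 2)) := by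
        field_simp
        rw [sq_abs]
    _ ≤ 1 * ((q ^ 2 + w ^ 2) / rhoL k l η t ^ 2 / (k ^ 2 + l ^ 2)) := by
        gcongr
        · exact div_le_one_of_le₀ (le_add_of_nonneg_left (sq_nonneg _)) (by positivity)
        · exact le_add_of_nonneg_left (sq_nonneg _)
    _ = _ := one_mul _

theorem sq_Q_weight_mul_le (hk : k ≠ 0) (t q w : ℝ) :
    (|(k : ℝ)| * |η - k * t| / ((k ^ 2 + l ^ 2) * rhoL k l η t ^ 2) * q) ^ 2 ≤
      (q ^ 2 + w ^ 2) / rhoL k l η t ^ 2 / (k ^ 2 + l ^ 2) := by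
  have hρ := rhoL_pos (l := l) (η := η) hk t
  calc _ = k ^ 2 / (k ^ 2 + l ^ 2) * ((η - k * t) ^ 2 / rhoL k l η t ^ 2) *
        (q ^ 2 / rhoL k l η t ^ 2 / (k ^ 2 + l ^ 2)) := by
        field_simp
        rw [sq_abs, sq_abs]
    _ ≤ 1 * 1 * ((q ^ 2 + w ^ 2) / rhoL k l η t ^ 2 / (k ^ 2 + l ^ 2)) := by
        gcongr
        · exact div_le_one_of_le₀ (le_add_of_nonneg_right (sq_nonneg _)) (by positivity)
        · exact div_le_one_of_le₀ (by rw [rhoL_sq]; nlinarith) (by positivity)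
        · exact le_add_of_nonneg_right (sq_nonneg _)
    _ = _ := by ring

/-- The linearized system at the mode `(k, η, l)` for `t ≥ 0`; `α` stands for `√(β(β - 1))`. -/
def IsLinearizedCouetteSolution (ν α : ℝ) (k l : ℤ) (η : ℝ) (Q W : ℝ → ℂ) : Prop :=
  (∀ t : ℝ, 0 ≤ t →
    HasDerivAt Q
      (-((ν * (rhoL k l η t)^2 : ℝ) : ℂ) * Q t
        - Complex.I * ((α * (l:ℝ) / rhoL k l η t : ℝ) : ℂ) * W t) t) ∧
  (∀ t : ℝ, 0 ≤ t →
    HasDerivAt W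
      (-((ν * (rhoL k l η t)^2 : ℝ) : ℂ) * W t
        - (((k:ℝ) * (η - (k:ℝ)*t) / (rhoL k l η t)^2 : ℝ) : ℂ) * W t
        - Complex.I * ((α * (l:ℝ) / rhoL k l η t : ℝ) : ℂ) * Q t) t)

variable {ν α : ℝ} {Q W : ℝ → ℂ}

theorem IsLinearizedCouetteSolution.energy_div_rhoL_sq_le
    (hsol : IsLinearizedCouetteSolution ν α k l η Q W) (hk : k ≠ 0) {T : ℝ} (hT : 0 ≤ T) :
    (‖Q T‖ ^ 2 + ‖W T‖ ^ 2) / rhoL k l η T ^ 2 ≤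
      (‖Q 0‖ ^ 2 + ‖W 0‖ ^ 2) / (k ^ 2 + l ^ 2) *
        Real.exp (-(2 * (ν * rhoLSqPrimitive k l η T))) := by
  set E := fun t => ‖Q t‖ ^ 2 + ‖W t‖ ^ 2
  set b := fun t => (k : ℝ) * (η - k * t) / rhoL k l η t ^ 2
  set A := fun t => ν * rhoLSqPrimitive k l η t
  have hA (s : ℝ) : HasDerivAt A (ν * rhoL k l η s ^ 2) s :=
    (hasDerivAt_rhoLSqPrimitive s).const_mul ν
  have hE (s : ℝ) (hs : 0 ≤ s) :
      HasDerivAt E (-2 * (ν * rhoL k l η s ^ 2) * E s - 2 * b s * ‖W s‖ ^ 2) s :=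
    hasDerivAt_energy (a := fun t => ν * rhoL k l η t ^ 2) (c := fun t => α * l / rhoL k l η t)
      (hsol.1 s hs) (hsol.2 s hs)
  have hm (s : ℝ) : HasDerivAt (fun t => rhoL k l η t ^ 2) (-2 * b s * rhoL k l η s ^ 2) s := by
    refine (hasDerivAt_rhoL_sq s).congr_deriv ?_
    simp only [b]
    field_simp [(rhoL_pos hk s).ne']
  obtain ⟨s₁, ⟨hs₁, hs₁T⟩, hbefore, hafter⟩ := exists_mem_Icc_shear_sign_split k η hT
  have hG : E s₁ * Real.exp (2 * A s₁) ≤ E 0 := by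
    have := antitoneOn_mul_exp_of_hasDerivAt (b := b) (P := fun s => ‖W s‖ ^ 2)
      (fun s _ => hA s) (fun s hs => hE s hs.1)
      (fun s hs => div_nonneg (hbefore s hs) (sq_nonneg _)) (fun s _ => sq_nonneg _)
      (left_mem_Icc.2 hs₁) (right_mem_Icc.2 hs₁) hs₁
    simpa [A, rhoLSqPrimitive_zero] using this
  have hH : E T / rhoL k l η T ^ 2 * Real.exp (2 * A T) ≤
      E s₁ / rhoL k l η s₁ ^ 2 * Real.exp (2 * A s₁) :=
    antitoneOn_div_mul_exp_of_hasDerivAt (P := fun s => ‖W s‖ ^ 2)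
      (fun s _ => hA s) (fun s hs => hE s (hs₁.trans hs.1)) (fun s _ => hm s)
      (fun s _ => pow_pos (rhoL_pos hk s) 2)
      (fun s hs => div_nonpos_of_nonpos_of_nonneg (hafter s hs) (sq_nonneg _))
      (fun s _ => le_add_of_nonneg_left (sq_nonneg _))
      (left_mem_Icc.2 hs₁T) (right_mem_Icc.2 hs₁T) hs₁T
  rw [Real.exp_neg, ← div_eq_mul_inv, le_div_iff₀ (Real.exp_pos _)]
  calc E T / rhoL k l η T ^ 2 * Real.exp (2 * A T)
      ≤ E s₁ * Real.exp (2 * A s₁) / rhoL k l η s₁ ^ 2 := by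
        simpa only [div_mul_eq_mul_div] using hH
    _ ≤ E 0 / (k ^ 2 + l ^ 2) :=
      div_le_div₀ (by positivity) hG (by positivity)
        (sq_add_sq_le_rhoL_sq s₁)

theorem IsLinearizedCouetteSolution.energy_div_rhoL_sq_div_le
    (hsol : IsLinearizedCouetteSolution ν α k l η Q W) (hν : 0 ≤ ν) (hk : k ≠ 0)
    {T : ℝ} (hT : 0 ≤ T) :
    (‖Q T‖ ^ 2 + ‖W T‖ ^ 2) / rhoL k l η T ^ 2 / (k ^ 2 + l ^ 2) ≤
      Real.exp (-(ν * k ^ 2 * T ^ 3) / 24) ^ 2 * (‖Q 0‖ ^ 2 + ‖W 0‖ ^ 2) := by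
  have hκ := one_le_sq_add_sq (l := l) hk
  have hM := rhoLSqPrimitive_ge (k := k) (l := l) (η := η) hT
  have hexp : Real.exp (-(2 * (ν * rhoLSqPrimitive k l η T))) ≤
      Real.exp (-(ν * k ^ 2 * T ^ 3) / 24) ^ 2 := by
    rw [← Real.exp_nat_mul]
    refine Real.exp_le_exp.2 ?_
    push_cast
    nlinarith [mul_le_mul_of_nonneg_left hM hν,
      mul_nonneg (mul_nonneg hν (sq_nonneg (k : ℝ))) (pow_nonneg hT 3)]
  calc _ ≤ (‖Q 0‖ ^ 2 + ‖W 0‖ ^ 2) / (k ^ 2 + l ^ 2) *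
        Real.exp (-(2 * (ν * rhoLSqPrimitive k l η T))) / (k ^ 2 + l ^ 2) := by
        gcongr
        exact hsol.energy_div_rhoL_sq_le hk hT
    _ ≤ (‖Q 0‖ ^ 2 + ‖W 0‖ ^ 2) * Real.exp (-(2 * (ν * rhoLSqPrimitive k l η T))) := by
        rw [div_mul_eq_mul_div, div_div]
        exact div_le_self (by positivity) (by nlinarith)
    _ ≤ _ := by
        rw [mul_comm]
        gcongr

end Couette

theorem enhanced_dissipation_u1_general
    (β : ℝ)
    (ν : ℝ) (hν : 0 < ν)
    (k l : ℤ) (hk : k ≠ 0) (η : ℝ)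
    (Q W : ℝ → ℂ)
    (hQ : ∀ t : ℝ, 0 ≤ t →
      HasDerivAt Q
        (-((ν * (rhoL k l η t)^2 : ℝ) : ℂ) * Q t
          - Complex.I *
            ((Real.sqrt (β * (β - 1)) * (l:ℝ) / rhoL k l η t : ℝ) : ℂ) * W t) t)
    (hW : ∀ t : ℝ, 0 ≤ t →
      HasDerivAt W
        (-((ν * (rhoL k l η t)^2 : ℝ) : ℂ) * W t
          - (((k:ℝ) * (η - (k:ℝ)*t) / (rhoL k l η t)^2 : ℝ) : ℂ) * W t
          - Complex.I *
            ((Real.sqrt (β * (β - 1)) * (l:ℝ) / rhoL k l η t : ℝ) : ℂ) * Q t) t) :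
    ∀ t : ℝ, 0 ≤ t →
      Real.sqrt ((β - 1)/β) *
          (|(l:ℝ)| / (((k:ℝ)^2 + (l:ℝ)^2) * rhoL k l η t)) * ‖W t‖
        + (|(k:ℝ)| * |η - (k:ℝ)*t| /
            (((k:ℝ)^2 + (l:ℝ)^2) * (rhoL k l η t)^2)) * ‖Q t‖
      ≤ (Real.sqrt ((β - 1)/β) + 1) *
          Real.exp (-(ν * (k:ℝ)^2 * t^3) / 24) *
          Real.sqrt (‖Q 0‖^2 + ‖W 0‖^2) := by
  intro T hT
  have hsol : IsLinearizedCouetteSolution ν (Real.sqrt (β * (β - 1))) k l η Q W := ⟨hQ, hW⟩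
  have hdecay := hsol.energy_div_rhoL_sq_div_le hν.le hk hT
  have hWT := le_mul_sqrt_of_sq_le (Real.exp_pos _).le
    ((sq_W_weight_mul_le hk T ‖Q T‖ ‖W T‖).trans hdecay)
  have hQT := le_mul_sqrt_of_sq_le (Real.exp_pos _).le
    ((sq_Q_weight_mul_le hk T ‖Q T‖ ‖W T‖).trans hdecay)
  linarith [mul_le_mul_of_nonneg_left hWT (Real.sqrt_nonneg ((β - 1) / β))]

/-- Enhanced dissipation bound for the reconstructed first velocity
component at a single nonzero Fourier mode in the stable regime
`β < 0` or `β > 1`, `α = √(β(β-1))`. -/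
theorem enhanced_dissipation_u1
    (β : ℝ) (hβ : β < 0 ∨ 1 < β)
    (ν : ℝ) (hν : 0 < ν) (hν1 : ν ≤ 1)
    (k l : ℤ) (hk : k ≠ 0) (η : ℝ)
    (Q W : ℝ → ℂ)
    (hQ : ∀ t : ℝ, 0 ≤ t →
      HasDerivAt Q
        (-((ν * (rhoL k l η t)^2 : ℝ) : ℂ) * Q t
          - Complex.I *
            ((Real.sqrt (β * (β - 1)) * (l:ℝ) / rhoL k l η t : ℝ) : ℂ) * W t) t)
    (hW : ∀ t : ℝ, 0 ≤ t →
      HasDerivAt W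
        (-((ν * (rhoL k l η t)^2 : ℝ) : ℂ) * W t
          - (((k:ℝ) * (η - (k:ℝ)*t) / (rhoL k l η t)^2 : ℝ) : ℂ) * W t
          - Complex.I *
            ((Real.sqrt (β * (β - 1)) * (l:ℝ) / rhoL k l η t : ℝ) : ℂ) * Q t) t) :
    ∀ t : ℝ, 0 ≤ t →
      Real.sqrt ((β - 1)/β) *
          (|(l:ℝ)| / (((k:ℝ)^2 + (l:ℝ)^2) * rhoL k l η t)) * ‖W t‖
        + (|(k:ℝ)| * |η - (k:ℝ)*t| /
            (((k:ℝ)^2 + (l:ℝ)^2) * (rhoL k l η t)^2)) * ‖Q t‖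
      ≤ (Real.sqrt ((β - 1)/β) + 1) *
          Real.exp (-(ν * (k:ℝ)^2 * t^3) / 24) *
          Real.sqrt (‖Q 0‖^2 + ‖W 0‖^2) :=
  enhanced_dissipation_u1_general β ν hν k l hk η Q W hQ hW
end
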